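/- Fix n ≥ 1. For all a,b,c,d ∈ ZMod n and all (k,l), (p,q) ∈ (ZMod n)²: |⟨Φ_kl| (W_cd ⊗ W_ef) |Φ_pq⟩|² equals 1 if k = p + e − c and l = q + d + f (in ZMod n), and equals 0 otherwise, where here the pre-processing Weyl operator is W_cd and the post-processing one is W_ef. Equivalently, the n²×n² matrix B^{(cd,ef)} with entries B_{(kl),(pq)} = |⟨Φ_kl| (W_cd ⊗ W_ef) |Φ_pq⟩|² equals the local cyclic permutation matrix X_n^{e−c} ⊗ X_n^{d+f}. -/

import Mathlib

/-!
Writing `|Φ_ab⟩ = vec (W_ab) / √n`, the amplitude `⟨Φ_kl| (A ⊗ B) |Φ_pq⟩` becomes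
`tr (W_klᴴ B W_pq Aᵀ) / n`. Products, transposes and adjoints of Weyl operators are again Weyl
operators up to a phase `ψ(·)` of the standard character `ψ` of `ZMod n`, so for `A = W_cd`,
`B = W_ef` the trace is a phase times `tr W_xy` with `x = e + p - c - k`, `y = d + f + q - l`;
by orthogonality of characters `tr W_xy` is `n` when `x = y = 0` and `0` otherwise.
-/

open Matrix Kronecker

noncomputable section

/-- A probability vector: nonnegative entries summing to 1. -/
def IsProbVec {ι : Type*} [Fintype ι] (p : ι → ℝ) : Prop :=
  (∀ i, 0 ≤ p i) ∧ ∑ i, p i = 1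

/-- The discrete Weyl operators on `ℂⁿ`: `W_ab = Σ_c ω^{bc} |a+c⟩⟨c|`, `ω = e^{2πi/n}`. -/
def Wd (n : ℕ) [NeZero n] (a b : ZMod n) : Matrix (ZMod n) (ZMod n) ℂ :=
  Matrix.of fun r c =>
    if r = a + c then Complex.exp (2 * Real.pi * Complex.I / n) ^ (b.val * c.val) else 0

/-- The generalized Bell basis vector `|Φ_ab⟩ = (I ⊗ W_ab)|Φ_00⟩`,
`|Φ_00⟩ = (1/√n) Σ_i |ii⟩`; explicitly `Φ_ab (i,j) = (1/√n) (W_ab) j i`. -/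
def belld (n : ℕ) [NeZero n] (a b : ZMod n) : ZMod n × ZMod n → ℂ :=
  fun p => ((Real.sqrt n : ℝ) : ℂ)⁻¹ * Wd n a b p.2 p.1

/-- The generalized Bell projector `|Φ_ab⟩⟨Φ_ab|`. -/
def bellProjd (n : ℕ) [NeZero n] (a b : ZMod n) :
    Matrix (ZMod n × ZMod n) (ZMod n × ZMod n) ℂ :=
  Matrix.of fun p q => belld n a b p * (starRingEnd ℂ) (belld n a b q)

/-- The real `n²×n²` local cyclic permutation matrix `X_n^α ⊗ X_n^β`, with entries
`δ_{k, p+α} δ_{l, q+β}`. -/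
def localCycMat (n : ℕ) (α β : ZMod n) :
    Matrix (ZMod n × ZMod n) (ZMod n × ZMod n) ℝ :=
  Matrix.of fun r s => if r.1 = s.1 + α ∧ r.2 = s.2 + β then 1 else 0

section WeylAlgebra

variable {n : ℕ} [NeZero n]

open ZMod (stdAddChar)

lemma Wd_apply (a b r s : ZMod n) :
    Wd n a b r s = if r = a + s then stdAddChar (b * s) else 0 := by
  have hω : Complex.exp (2 * Real.pi * Complex.I / n) ^ (b.val * s.val) = stdAddChar (b * s) := by
    rw [show b * s = ((b.val * s.val : ℕ) : ZMod n) by simp, ZMod.stdAddChar_apply,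
      ZMod.toCircle_natCast, ← Complex.exp_nat_mul]
    ring_nf
  simp only [Wd, of_apply, hω]

lemma Wd_mul_Wd (a b c d : ZMod n) :
    Wd n a b * Wd n c d = stdAddChar (b * c) • Wd n (a + c) (b + d) := by
  ext r s
  simp only [mul_apply, Wd_apply, Matrix.smul_apply, smul_eq_mul, mul_ite, mul_zero, ite_mul,
    zero_mul, Finset.sum_ite_eq', Finset.mem_univ, if_true, add_assoc]
  congr 1
  rw [← AddChar.map_add_eq_mul, ← AddChar.map_add_eq_mul]
  ring_nf

lemma Wd_transpose (a b : ZMod n) : (Wd n a b)ᵀ = stdAddChar (-(a * b)) • Wd n (-a) b := by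
  ext r s
  simp only [transpose_apply, Wd_apply, Matrix.smul_apply, smul_eq_mul, mul_ite, mul_zero]
  by_cases h : r = -a + s
  · subst h
    rw [if_pos (by ring), if_pos rfl, ← AddChar.map_add_eq_mul]
    ring_nf
  · rw [if_neg h, if_neg (fun h' => h (by rw [h']; ring))]

lemma Wd_map_star (a b : ZMod n) : (Wd n a b).map star = Wd n a (-b) := by
  ext r s
  simp only [map_apply, Wd_apply, apply_ite star, star_zero, neg_mul, AddChar.map_neg_eq_conj]
  rfl

lemma Wd_conjTranspose (a b : ZMod n) : (Wd n a b)ᴴ = stdAddChar (a * b) • Wd n (-a) (-b) := by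
  rw [conjTranspose, transpose_map, Wd_map_star, Wd_transpose, mul_neg, neg_neg]

lemma trace_Wd (a b : ZMod n) : trace (Wd n a b) = if a = 0 ∧ b = 0 then (n : ℂ) else 0 := by
  simp only [trace, diag, Wd_apply, right_eq_add]
  by_cases ha : a = 0
  · simp only [ha, if_true, true_and, mul_comm b,
      AddChar.sum_mulShift b (ZMod.isPrimitive_stdAddChar n), ZMod.card, Nat.cast_ite, Nat.cast_zero]
  · simp [ha]

lemma normSq_addChar_apply {G : Type*} [AddLeftCancelMonoid G] [Finite G] (ψ : AddChar G ℂ)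
    (x : G) : Complex.normSq (ψ x) = 1 := by
  rw [Complex.normSq_eq_norm_sq, AddChar.norm_apply, one_pow]

lemma belld_eq_smul_vec (a b : ZMod n) :
    belld n a b = ((Real.sqrt n : ℝ) : ℂ)⁻¹ • vec (Wd n a b) := rfl

lemma bell_overlap_eq_trace (A B : Matrix (ZMod n) (ZMod n) ℂ) (k l p q : ZMod n) :
    star (belld n k l) ⬝ᵥ ((A ⊗ₖ B) *ᵥ belld n p q) =
      (n : ℂ)⁻¹ * trace ((Wd n k l)ᴴ * (B * Wd n p q * Aᵀ)) := by
  have hn : (star ((Real.sqrt n : ℝ) : ℂ)⁻¹) * ((Real.sqrt n : ℝ) : ℂ)⁻¹ = (n : ℂ)⁻¹ := by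
    rw [star_inv₀, Complex.star_def, Complex.conj_ofReal, ← mul_inv, ← Complex.ofReal_mul,
      Real.mul_self_sqrt (Nat.cast_nonneg n), Complex.ofReal_natCast]
  rw [belld_eq_smul_vec, belld_eq_smul_vec, star_smul, mulVec_smul, kronecker_mulVec_vec,
    smul_dotProduct, dotProduct_smul, star_vec_dotProduct_vec, smul_smul, smul_eq_mul, hn]

lemma normSq_bell_overlap_kronecker_Wd (c d e f k l p q : ZMod n) :
    Complex.normSq (star (belld n k l) ⬝ᵥ ((Wd n c d ⊗ₖ Wd n e f) *ᵥ belld n p q)) =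
      if k = p + e - c ∧ l = q + d + f then 1 else 0 := by
  rw [bell_overlap_eq_trace]
  simp only [Wd_conjTranspose, Wd_transpose, Wd_mul_Wd, Matrix.smul_mul, Matrix.mul_smul,
    trace_smul, smul_eq_mul, map_mul, normSq_addChar_apply, one_mul, trace_Wd]
  have hcond : (-k + (e + p + -c) = 0 ∧ -l + (f + q + d) = 0) ↔
      (k = p + e - c ∧ l = q + d + f) := by
    simp only [neg_add_eq_zero]
    constructor <;> rintro ⟨rfl, rfl⟩ <;> constructor <;> ring
  simp only [hcond]
  split_ifs
  · rw [map_inv₀, inv_mul_cancel₀ (by simp [NeZero.ne n])]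
  · rw [map_zero, mul_zero]

end WeylAlgebra

/-- `|⟨Φ_kl| (W_cd ⊗ W_ef) |Φ_pq⟩|²` equals `1` if `k = p + e − c` and
`l = q + d + f`, and `0` otherwise; equivalently, the matrix
`B^{(cd,ef)}_{(kl),(pq)} = |⟨Φ_kl| (W_cd ⊗ W_ef) |Φ_pq⟩|²` is the local cyclic
permutation matrix `X_n^{e−c} ⊗ X_n^{d+f}`. -/
theorem weyl_bell_overlap (n : ℕ) [NeZero n] (c d e f : ZMod n) :
    (∀ k l p q : ZMod n,
      Complex.normSq
          (star (belld n k l) ⬝ᵥ ((Wd n c d ⊗ₖ Wd n e f) *ᵥ belld n p q)) =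
        if k = p + e - c ∧ l = q + d + f then 1 else 0) ∧
    (Matrix.of fun kl pq : ZMod n × ZMod n =>
        Complex.normSq
          (star (belld n kl.1 kl.2) ⬝ᵥ
            ((Wd n c d ⊗ₖ Wd n e f) *ᵥ belld n pq.1 pq.2))) =
      localCycMat n (e - c) (d + f) := by
  refine ⟨normSq_bell_overlap_kronecker_Wd c d e f, ?_⟩
  ext ⟨k, l⟩ ⟨p, q⟩
  simp only [of_apply, localCycMat, normSq_bell_overlap_kronecker_Wd, add_sub_assoc, add_assoc]

end
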